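/- Let q ≥ 2, r ≥ 0, and let f : ℕ → 𝕌 (the complex unit circle) be q-quasimultiplicative with gap ≤ r. If (I_i)_{i=1}^s are finite subsets of ℕ pairwise separated by gaps of length > r (i.e., |a − b| > r for a ∈ I_i, b ∈ I_j, i ≠ j), and I = ⋃_{i=1}^s I_i, then the average of f over {n : supp(n) ⊆ I} equals the product over i of the averages of f over {n : supp(n) ⊆ I_i}. Consequently λ_f(I) = Σ_{i=1}^s λ_f(I_i), where λ_f(J) ∈ [0, ∞] is defined by |E_{supp(n)⊆J} f(n)| = exp(−λ_f(J)). -/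

import Mathlib

open scoped ENNReal

/-- `restrictSet q n I` is `n|_I`: the integer obtained by replacing all base-`q` digits of `n`
at positions outside `I` by `0`. -/
noncomputable def restrictSet (q n : ℕ) (I : Set ℕ) : ℕ :=
  ∑ i ∈ Finset.range n, Set.indicator I (fun i => n / q ^ i % q * q ^ i) i

/-- The (finite) set of all `n ≥ 0` whose base-`q` expansion is supported on `I`,
i.e. `supp n ⊆ I`. -/
noncomputable def digitNums (q : ℕ) (I : Finset ℕ) : Finset ℕ :=
  (Finset.range (q ^ (I.sup id + 1))).filter (fun n => restrictSet q n ↑I = n)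

/-- The average `E_{supp(n) ⊆ I} f(n)` over all `n` with base-`q` support contained in `I`. -/
noncomputable def avgD (q : ℕ) (f : ℕ → ℂ) (I : Finset ℕ) : ℂ :=
  (∑ n ∈ digitNums q I, f n) / (digitNums q I).card

/-- The quantity `λ_f(I) ∈ [0, ∞]` defined by `|E_{supp(n) ⊆ I} f(n)| = exp (−λ_f(I))`. -/
noncomputable def lam (q : ℕ) (f : ℕ → ℂ) (I : Finset ℕ) : ℝ≥0∞ :=
  if avgD q f I = 0 then ⊤ else ENNReal.ofReal (-Real.log (‖avgD q f I‖))

/-- `λ̄_f(I) = min (λ_f(I), 1)`. -/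
noncomputable def lamBar (q : ℕ) (f : ℕ → ℂ) (I : Finset ℕ) : ℝ≥0∞ :=
  min (lam q f I) 1


lemma sum_digits_mod (q : ℕ) (hq : 2 ≤ q) (n K : ℕ) :
    ∑ i ∈ Finset.range K, n / q ^ i % q * q ^ i = n % q ^ K := by
  induction K with
  | zero => simp [Nat.mod_one]
  | succ K ih =>
    rw [Finset.sum_range_succ, ih]
    have hapos : 0 < q ^ K := Nat.pow_pos (by omega)
    have hdq : n / q ^ K % q < q := Nat.mod_lt _ (by omega)
    have hma : n % q ^ K < q ^ K := Nat.mod_lt _ hapos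
    have h2 : n / q ^ K = q * (n / q ^ K / q) + n / q ^ K % q := (Nat.div_add_mod _ q).symm
    have h1 : n = q ^ K * (n / q ^ K) + n % q ^ K := (Nat.div_add_mod n (q ^ K)).symm
    have hsucc : q ^ (K + 1) = q ^ K * q := pow_succ q K
    obtain ⟨t, ht⟩ : ∃ t, n / q ^ K / q = t := ⟨_, rfl⟩
    rw [ht] at h2
    obtain ⟨d, hd⟩ : ∃ d, n / q ^ K % q = d := ⟨_, rfl⟩
    rw [hd] at h2 hdq ⊢
    obtain ⟨m, hm⟩ : ∃ m, n % q ^ K = m := ⟨_, rfl⟩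
    rw [hm] at h1 hma ⊢
    have hlt : d * q ^ K + m < q ^ K * q := by
      calc d * q ^ K + m < d * q ^ K + q ^ K := by omega
        _ = (d + 1) * q ^ K := by ring
        _ ≤ q * q ^ K := Nat.mul_le_mul_right _ hdq
        _ = q ^ K * q := Nat.mul_comm q _
    have hn : n = (d * q ^ K + m) + (q ^ K * q) * t := by rw [h1, h2]; ring
    rw [hsucc, hn, Nat.add_mul_mod_self_left, Nat.mod_eq_of_lt hlt]
    ring

lemma self_eq_sum_digits (q : ℕ) (hq : 2 ≤ q) (n : ℕ) :
    n = ∑ i ∈ Finset.range n, n / q ^ i % q * q ^ i := by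
  rw [sum_digits_mod q hq, Nat.mod_eq_of_lt (Nat.lt_pow_self (n := n) (by omega))]

lemma digit_eq_zero_of_le (q : ℕ) (hq : 2 ≤ q) (n i : ℕ) (h : n ≤ i) :
    n / q ^ i % q = 0 := by
  have : n < q ^ i := lt_of_lt_of_le (Nat.lt_pow_self (n := n) (by omega))
    (Nat.pow_le_pow_right (by omega) h)
  rw [Nat.div_eq_of_lt this, Nat.zero_mod]

lemma mem_digitNums (q : ℕ) (hq : 2 ≤ q) (I : Finset ℕ) (n : ℕ) :
    n ∈ digitNums q I ↔ ∀ i, n / q ^ i % q ≠ 0 → i ∈ I := by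
  constructor
  · rintro h i hi
    rw [digitNums, Finset.mem_filter] at h
    obtain ⟨-, hres⟩ := h
    by_contra hiI
    have hin : i < n := by
      by_contra hge
      exact hi (digit_eq_zero_of_le q hq n i (by omega))
    have hlt : restrictSet q n ↑I < n := by
      conv_rhs => rw [self_eq_sum_digits q hq n]
      rw [restrictSet]
      apply Finset.sum_lt_sum
      · intro j _
        by_cases hj : j ∈ (I : Set ℕ) <;> simp [Set.indicator_apply, hj]
      · refine ⟨i, Finset.mem_range.2 hin, ?_⟩
        have : i ∉ (I : Set ℕ) := by simpa using hiI
        simp only [Set.indicator_apply, if_neg this]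
        have : 0 < q ^ i := Nat.pow_pos (by omega)
        positivity
    omega
  · intro h
    have heq : restrictSet q n ↑I = n := by
      conv_rhs => rw [self_eq_sum_digits q hq n]
      rw [restrictSet]
      apply Finset.sum_congr rfl
      intro j _
      by_cases hj : j ∈ I
      · simp [Set.indicator_apply, hj]
      · have : n / q ^ j % q = 0 := by
          by_contra hne; exact hj (h j hne)
        simp [Set.indicator_apply, hj, this]
    rw [digitNums, Finset.mem_filter, Finset.mem_range]
    refine ⟨?_, heq⟩
    set S := I.sup id with hS
    have h1 : n = ∑ i ∈ (Finset.range n).filter (· < S + 1), n / q ^ i % q * q ^ i := by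
      nth_rewrite 1 [self_eq_sum_digits q hq n]
      rw [Finset.sum_filter_of_ne]
      intro i _ hne
      have hd : n / q ^ i % q ≠ 0 := by
        intro h0; rw [h0] at hne; simp at hne
      have := Finset.le_sup (f := id) (h i hd)
      simpa [hS] using Nat.lt_succ_of_le this
    have h2 : ∑ i ∈ (Finset.range n).filter (· < S + 1), n / q ^ i % q * q ^ i
        ≤ ∑ i ∈ Finset.range (S + 1), n / q ^ i % q * q ^ i := by
      apply Finset.sum_le_sum_of_subset
      intro x hx
      simp only [Finset.mem_filter, Finset.mem_range] at hx ⊢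
      exact hx.2
    rw [sum_digits_mod q hq] at h2
    have h3 : n % q ^ (S + 1) < q ^ (S + 1) :=
      Nat.mod_lt _ (Nat.pow_pos (by omega))
    omega

lemma zero_mem_digitNums (q : ℕ) (hq : 2 ≤ q) (I : Finset ℕ) : 0 ∈ digitNums q I :=
  (mem_digitNums q hq I 0).2 (by simp)

lemma lt_pow_of_digits (q : ℕ) (hq : 2 ≤ q) (n c : ℕ)
    (h : ∀ i, n / q ^ i % q ≠ 0 → i < c) : n < q ^ c := by
  have h1 : n = ∑ i ∈ (Finset.range n).filter (· < c), n / q ^ i % q * q ^ i := by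
    nth_rewrite 1 [self_eq_sum_digits q hq n]
    rw [Finset.sum_filter_of_ne]
    intro i _ hne
    refine h i ?_
    intro h0; rw [h0] at hne; simp at hne
  have h2 : ∑ i ∈ (Finset.range n).filter (· < c), n / q ^ i % q * q ^ i
      ≤ ∑ i ∈ Finset.range c, n / q ^ i % q * q ^ i := by
    apply Finset.sum_le_sum_of_subset
    intro x hx
    simp only [Finset.mem_filter, Finset.mem_range] at hx ⊢
    exact hx.2
  rw [sum_digits_mod q hq] at h2
  have h3 : n % q ^ c < q ^ c := Nat.mod_lt _ (Nat.pow_pos (by omega))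
  omega

lemma lt_pow_of_mem_digitNums (q : ℕ) (hq : 2 ≤ q) (I : Finset ℕ) (n c : ℕ)
    (hI : ∀ a ∈ I, a < c) (hn : n ∈ digitNums q I) : n < q ^ c := by
  refine lt_pow_of_digits q hq n c fun i hi => hI i ?_
  exact (mem_digitNums q hq I n).1 hn i hi

lemma pow_dvd_of_mem_digitNums (q : ℕ) (hq : 2 ≤ q) (I : Finset ℕ) (n c : ℕ)
    (hI : ∀ a ∈ I, c ≤ a) (hn : n ∈ digitNums q I) : q ^ c ∣ n := by
  apply Nat.dvd_of_mod_eq_zero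
  rw [← sum_digits_mod q hq]
  apply Finset.sum_eq_zero
  intro i hi
  rw [Finset.mem_range] at hi
  have : n / q ^ i % q = 0 := by
    by_contra hne
    have := hI i ((mem_digitNums q hq I n).1 hn i hne)
    omega
  simp [this]

lemma digit_mod (q c i n : ℕ) (hq : 2 ≤ q) (hi : i < c) :
    n % q ^ c / q ^ i % q = n / q ^ i % q := by
  have hc : q ^ c = q ^ i * q ^ (c - i) := by
    rw [← pow_add]; congr 1; omega
  rw [hc, Nat.mod_mul_right_div_self]
  exact Nat.mod_mod_of_dvd _ (dvd_pow_self q (by omega))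

lemma add_mod_pow_eq (q c l u : ℕ) (hl : l < q ^ c) (hu : q ^ c ∣ u) :
    (l + u) % q ^ c = l := by
  obtain ⟨k, rfl⟩ := hu
  rw [Nat.add_mul_mod_self_left, Nat.mod_eq_of_lt hl]

lemma digit_add_low (q c l u i : ℕ) (hq : 2 ≤ q) (hl : l < q ^ c) (hu : q ^ c ∣ u)
    (hi : i < c) : (l + u) / q ^ i % q = l / q ^ i % q := by
  rw [← digit_mod q c i (l + u) hq hi, add_mod_pow_eq q c l u hl hu]

lemma digit_add_high (q c l u i : ℕ) (hq : 2 ≤ q) (hl : l < q ^ c) (hu : q ^ c ∣ u)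
    (hi : c ≤ i) : (l + u) / q ^ i % q = u / q ^ i % q := by
  obtain ⟨k, rfl⟩ := hu
  have hc : q ^ i = q ^ c * q ^ (i - c) := by
    rw [← pow_add]; congr 1; omega
  have hcpos : 0 < q ^ c := Nat.pow_pos (by omega)
  rw [hc, ← Nat.div_div_eq_div_mul, ← Nat.div_div_eq_div_mul]
  congr 2
  rw [Nat.add_mul_div_left _ _ hcpos, Nat.div_eq_of_lt hl, Nat.mul_div_cancel_left _ hcpos]
  omega

section Split

variable (q : ℕ) (hq : 2 ≤ q) (L U : Finset ℕ) (c : ℕ)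
  (hL : ∀ a ∈ L, a < c) (hU : ∀ b ∈ U, c ≤ b)

include hq hL hU in
lemma sum_digitNums_union {M : Type*} [AddCommMonoid M] (g : ℕ → M) :
    ∑ n ∈ digitNums q (L ∪ U), g n
      = ∑ p ∈ digitNums q L ×ˢ digitNums q U, g (p.1 + p.2) := by
  have hcpos : 0 < q ^ c := Nat.pow_pos (by omega)
  apply Finset.sum_nbij' (i := fun n => (n % q ^ c, q ^ c * (n / q ^ c)))
    (j := fun p => p.1 + p.2)
  · intro n hn
    have hmem := (mem_digitNums q hq _ n).1 hn
    have hl : n % q ^ c < q ^ c := Nat.mod_lt _ hcpos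
    have hdvd : q ^ c ∣ q ^ c * (n / q ^ c) := Dvd.intro _ rfl
    have hn_eq : n = n % q ^ c + q ^ c * (n / q ^ c) := by
      rw [Nat.add_comm, Nat.div_add_mod]
    rw [Finset.mem_product]
    constructor
    · rw [mem_digitNums q hq]
      intro i hi
      by_cases hic : i < c
      · rw [digit_mod q c i n hq hic] at hi
        rcases Finset.mem_union.1 (hmem i hi) with h | h
        · exact h
        · exact absurd (hU i h) (by omega)
      · exfalso
        apply hi
        have : n % q ^ c < q ^ i :=
          lt_of_lt_of_le hl (Nat.pow_le_pow_right (by omega) (by omega))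
        rw [Nat.div_eq_of_lt this, Nat.zero_mod]
    · rw [mem_digitNums q hq]
      intro i hi
      by_cases hic : i < c
      · exfalso
        apply hi
        rw [← digit_mod q c i _ hq hic, Nat.mul_mod_right, Nat.zero_div, Nat.zero_mod]
      · rw [← digit_add_high q c (n % q ^ c) _ i hq hl hdvd (by omega), ← hn_eq] at hi
        rcases Finset.mem_union.1 (hmem i hi) with h | h
        · exact absurd (hL i h) (by omega)
        · exact h
  · rintro ⟨l, u⟩ hp
    rw [Finset.mem_product] at hp
    obtain ⟨hlm, hum⟩ := hp
    have hl : l < q ^ c := lt_pow_of_mem_digitNums q hq L l c hL hlm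
    have hu : q ^ c ∣ u := pow_dvd_of_mem_digitNums q hq U u c hU hum
    rw [mem_digitNums q hq]
    intro i hi
    by_cases hic : i < c
    · rw [digit_add_low q c l u i hq hl hu hic] at hi
      exact Finset.mem_union_left _ ((mem_digitNums q hq L l).1 hlm i hi)
    · rw [digit_add_high q c l u i hq hl hu (by omega)] at hi
      exact Finset.mem_union_right _ ((mem_digitNums q hq U u).1 hum i hi)
  · intro n _
    simp only
    rw [Nat.add_comm, Nat.div_add_mod]
  · rintro ⟨l, u⟩ hp
    rw [Finset.mem_product] at hp
    have hl : l < q ^ c := lt_pow_of_mem_digitNums q hq L l c hL hp.1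
    have hu : q ^ c ∣ u := pow_dvd_of_mem_digitNums q hq U u c hU hp.2
    obtain ⟨k, rfl⟩ := hu
    have h1 : (l + q ^ c * k) % q ^ c = l := by
      rw [Nat.add_mul_mod_self_left, Nat.mod_eq_of_lt hl]
    have h2 : (l + q ^ c * k) / q ^ c = k := by
      rw [Nat.add_mul_div_left _ _ hcpos, Nat.div_eq_of_lt hl, Nat.zero_add]
    simp [h1, h2]
  · intro n _
    simp only
    rw [Nat.add_comm, Nat.div_add_mod]

include hq hL hU in
lemma card_digitNums_union :
    (digitNums q (L ∪ U)).card = (digitNums q L).card * (digitNums q U).card := by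
  have := sum_digitNums_union q hq L U c hL hU (M := ℕ) (fun _ => 1)
  simpa [Finset.card_product] using this

end Split

lemma digitNums_empty (q : ℕ) (hq : 2 ≤ q) : digitNums q ∅ = {0} := by
  ext n
  rw [mem_digitNums q hq, Finset.mem_singleton]
  constructor
  · intro h
    rw [self_eq_sum_digits q hq n]
    apply Finset.sum_eq_zero
    intro i _
    have : n / q ^ i % q = 0 := by
      by_contra hne; simpa using h i hne
    simp [this]
  · rintro rfl
    simp
  
lemma avgD_empty (q : ℕ) (hq : 2 ≤ q) (f : ℕ → ℂ) (hf0 : f 0 = 1) :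
    avgD q f ∅ = 1 := by
  rw [avgD, digitNums_empty q hq]
  simp [hf0]

lemma card_digitNums_pos (q : ℕ) (hq : 2 ≤ q) (I : Finset ℕ) :
    0 < (digitNums q I).card :=
  Finset.card_pos.2 ⟨0, zero_mem_digitNums q hq I⟩

lemma avgD_union_gap (q r : ℕ) (hq : 2 ≤ q) (f : ℕ → ℂ) (hf0 : f 0 = 1)
    (hqm : ∀ l n m : ℕ, m < q ^ l → q ^ (l + r) ∣ n → f (n + m) = f n * f m)
    (L U : Finset ℕ) (hgap : ∀ a ∈ L, ∀ b ∈ U, a + r < b) :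
    avgD q f (L ∪ U) = avgD q f L * avgD q f U := by
  rcases L.eq_empty_or_nonempty with rfl | hne
  · rw [Finset.empty_union, avgD_empty q hq f hf0, one_mul]
  set c := L.max' hne + 1 with hc
  have hL : ∀ a ∈ L, a < c := fun a ha => Nat.lt_succ_of_le (Finset.le_max' L a ha)
  have hU : ∀ b ∈ U, c ≤ b := fun b hb => by
    have := hgap _ (L.max'_mem hne) b hb; omega
  have hU' : ∀ b ∈ U, c + r ≤ b := fun b hb => by
    have := hgap _ (L.max'_mem hne) b hb; omega
  have hsum := sum_digitNums_union q hq L U c hL hU f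
  have hcard := card_digitNums_union q hq L U c hL hU
  have hfac : ∀ p ∈ digitNums q L ×ˢ digitNums q U, f (p.1 + p.2) = f p.2 * f p.1 := by
    rintro ⟨l, u⟩ hp
    rw [Finset.mem_product] at hp
    have hl : l < q ^ c := lt_pow_of_mem_digitNums q hq L l c hL hp.1
    have hu : q ^ (c + r) ∣ u := pow_dvd_of_mem_digitNums q hq U u (c + r) hU' hp.2
    rw [Nat.add_comm]
    exact hqm c u l hl hu
  rw [avgD, avgD, avgD, hsum, hcard, Finset.sum_congr rfl hfac]
  rw [Finset.sum_product]
  simp only [← Finset.sum_mul, ← Finset.mul_sum]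
  push_cast
  rw [div_mul_div_comm]
  ring

lemma cluster_subset (r s : ℕ) (I : Fin s → Finset ℕ)
    (hsep : ∀ i j, i ≠ j → ∀ a ∈ I i, ∀ b ∈ I j, (r : ℤ) < |(a : ℤ) - (b : ℤ)|)
    (T : Finset ℕ) (hne : T.Nonempty)
    (hTsub : ∀ x ∈ T, ∃ i, x ∈ I i)
    (hnocut : ∀ c, (∃ a ∈ T, a < c) → (∃ b ∈ T, c ≤ b) →
      ∃ a ∈ T, ∃ b ∈ T, a < c ∧ c ≤ b ∧ b ≤ a + r) :
    ∃ i0, ∀ x ∈ T, x ∈ I i0 := by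
  set M := T.max' hne with hM
  have hMT : M ∈ T := T.max'_mem hne
  obtain ⟨i0, hi0⟩ := hTsub M hMT
  refine ⟨i0, ?_⟩
  have key : ∀ k, ∀ b ∈ T, M - k ≤ b → b ∈ I i0 := by
    intro k
    induction k with
    | zero =>
      intro b hb hbk
      have : b ≤ M := Finset.le_max' T b hb
      have : b = M := by omega
      rwa [this]
    | succ k ih =>
      intro b hb hbk
      by_cases hbk' : M - k ≤ b
      · exact ih b hb hbk'
      have hbM : b < M := by omega
      obtain ⟨a', ha'T, b', hb'T, ha'c, hcb', hb'r⟩ :=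
        hnocut (b + 1) ⟨b, hb, by omega⟩ ⟨M, hMT, by omega⟩
      have hb'M : b' ≤ M := Finset.le_max' T b' hb'T
      have hb'I : b' ∈ I i0 := ih b' hb'T (by omega)
      obtain ⟨j, hj⟩ := hTsub b hb
      by_cases hji : j = i0
      · rwa [hji] at hj
      · exfalso
        have := hsep j i0 hji b hj b' hb'I
        have h1 : b < b' := by omega
        have h2 : b' ≤ b + r := by omega
        rw [abs_sub_comm, abs_of_nonneg (by push_cast; omega : (0:ℤ) ≤ (b':ℤ) - (b:ℤ))] at this
        push_cast at this
        omega
  intro x hx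
  exact key M x hx (by omega)

lemma avgD_biUnion_aux (q r : ℕ) (hq : 2 ≤ q) (f : ℕ → ℂ) (hf0 : f 0 = 1)
    (hqm : ∀ l n m : ℕ, m < q ^ l → q ^ (l + r) ∣ n → f (n + m) = f n * f m) :
    ∀ N s (I : Fin s → Finset ℕ), (Finset.univ.biUnion I).card ≤ N →
    (∀ i j, i ≠ j → ∀ a ∈ I i, ∀ b ∈ I j, (r : ℤ) < |(a : ℤ) - (b : ℤ)|) →
    avgD q f (Finset.univ.biUnion I) = ∏ i, avgD q f (I i) := by
  intro N
  induction N with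
  | zero =>
    intro s I hcard hsep
    have hT : Finset.univ.biUnion I = ∅ := Finset.card_eq_zero.1 (by omega)
    have hIe : ∀ i, I i = ∅ := by
      intro i
      have := Finset.subset_biUnion_of_mem I (Finset.mem_univ i) (s := Finset.univ)
      rw [hT] at this
      exact Finset.subset_empty.1 this
    rw [hT, avgD_empty q hq f hf0]
    rw [Finset.prod_congr rfl (fun i _ => by rw [hIe i, avgD_empty q hq f hf0])]
    simp
  | succ N ihN =>
    intro s I hcard hsep
    set T := Finset.univ.biUnion I with hT
    have hTsub : ∀ x ∈ T, ∃ i, x ∈ I i := by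
      intro x hx
      rw [hT, Finset.mem_biUnion] at hx
      obtain ⟨i, _, hi⟩ := hx
      exact ⟨i, hi⟩
    have hsubT : ∀ i, I i ⊆ T := fun i =>
      Finset.subset_biUnion_of_mem I (Finset.mem_univ i)
    by_cases hcut : ∃ c, (∃ a ∈ T, a < c) ∧ (∃ b ∈ T, c ≤ b) ∧
        ∀ a ∈ T, a < c → ∀ b ∈ T, c ≤ b → a + r < b
    · obtain ⟨c, ⟨a₀, ha₀T, ha₀c⟩, ⟨b₀, hb₀T, hb₀c⟩, hgap⟩ := hcut
      set L := T.filter (· < c) with hLdef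
      set U := T.filter (fun b => c ≤ b) with hUdef
      have hTLU : T = L ∪ U := by
        ext x
        simp only [hLdef, hUdef, Finset.mem_union, Finset.mem_filter]
        constructor
        · intro hx; by_cases h : x < c
          · exact Or.inl ⟨hx, h⟩
          · exact Or.inr ⟨hx, by omega⟩
        · rintro (⟨hx, -⟩ | ⟨hx, -⟩) <;> exact hx
      have hgapLU : ∀ a ∈ L, ∀ b ∈ U, a + r < b := by
        intro a ha b hb
        rw [hLdef, Finset.mem_filter] at ha
        rw [hUdef, Finset.mem_filter] at hb
        exact hgap a ha.1 ha.2 b hb.1 hb.2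
      have hLcard : L.card ≤ N := by
        have hss : L ⊂ T := by
          constructor
          · intro x hx; rw [hLdef, Finset.mem_filter] at hx; exact hx.1
          · intro habs
            have := habs hb₀T
            rw [hLdef, Finset.mem_filter] at this
            omega
        have := Finset.card_lt_card hss
        omega
      have hUcard : U.card ≤ N := by
        have hss : U ⊂ T := by
          constructor
          · intro x hx; rw [hUdef, Finset.mem_filter] at hx; exact hx.1
          · intro habs
            have := habs ha₀T
            rw [hUdef, Finset.mem_filter] at this
            omega
        have := Finset.card_lt_card hss
        omega
      set IL := fun i => (I i).filter (· < c) with hILdef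
      set IU := fun i => (I i).filter (fun b => c ≤ b) with hIUdef
      have hLb : Finset.univ.biUnion IL = L := by
        ext x
        rw [Finset.mem_biUnion, hLdef, Finset.mem_filter]
        constructor
        · rintro ⟨i, -, hx⟩
          rw [hILdef] at hx
          simp only [Finset.mem_filter] at hx
          exact ⟨hsubT i hx.1, hx.2⟩
        · rintro ⟨hx, hc⟩
          obtain ⟨i, hi⟩ := hTsub x hx
          refine ⟨i, Finset.mem_univ i, ?_⟩
          rw [hILdef]
          simp only [Finset.mem_filter]
          exact ⟨hi, hc⟩
      have hUb : Finset.univ.biUnion IU = U := by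
        ext x
        rw [Finset.mem_biUnion, hUdef, Finset.mem_filter]
        constructor
        · rintro ⟨i, -, hx⟩
          rw [hIUdef] at hx
          simp only [Finset.mem_filter] at hx
          exact ⟨hsubT i hx.1, hx.2⟩
        · rintro ⟨hx, hc⟩
          obtain ⟨i, hi⟩ := hTsub x hx
          refine ⟨i, Finset.mem_univ i, ?_⟩
          rw [hIUdef]
          simp only [Finset.mem_filter]
          exact ⟨hi, hc⟩
      have hsepL : ∀ i j, i ≠ j → ∀ a ∈ IL i, ∀ b ∈ IL j, (r : ℤ) < |(a : ℤ) - (b : ℤ)| := by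
        intro i j hij a ha b hb
        exact hsep i j hij a (Finset.mem_of_mem_filter a ha) b (Finset.mem_of_mem_filter b hb)
      have hsepU : ∀ i j, i ≠ j → ∀ a ∈ IU i, ∀ b ∈ IU j, (r : ℤ) < |(a : ℤ) - (b : ℤ)| := by
        intro i j hij a ha b hb
        exact hsep i j hij a (Finset.mem_of_mem_filter a ha) b (Finset.mem_of_mem_filter b hb)
      have hIHL := ihN s IL (by rw [hLb]; exact hLcard) hsepL
      have hIHU := ihN s IU (by rw [hUb]; exact hUcard) hsepU
      rw [hLb] at hIHL
      rw [hUb] at hIHU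
      have hsplit : ∀ i, avgD q f (I i) = avgD q f (IL i) * avgD q f (IU i) := by
        intro i
        have hIi : I i = IL i ∪ IU i := by
          ext x
          simp only [hILdef, hIUdef, Finset.mem_union, Finset.mem_filter]
          constructor
          · intro hx; by_cases h : x < c
            · exact Or.inl ⟨hx, h⟩
            · exact Or.inr ⟨hx, by omega⟩
          · rintro (⟨hx, -⟩ | ⟨hx, -⟩) <;> exact hx
        rw [hIi]
        apply avgD_union_gap q r hq f hf0 hqm
        intro a ha b hb
        rw [hILdef] at ha; rw [hIUdef] at hb
        simp only [Finset.mem_filter] at ha hb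
        exact hgap a (hsubT i ha.1) ha.2 b (hsubT i hb.1) hb.2
      calc avgD q f T = avgD q f L * avgD q f U := by
            rw [hTLU]; exact avgD_union_gap q r hq f hf0 hqm L U hgapLU
        _ = (∏ i, avgD q f (IL i)) * ∏ i, avgD q f (IU i) := by rw [hIHL, hIHU]
        _ = ∏ i, avgD q f (IL i) * avgD q f (IU i) := (Finset.prod_mul_distrib).symm
        _ = ∏ i, avgD q f (I i) := by
            exact Finset.prod_congr rfl fun i _ => (hsplit i).symm
    · rcases T.eq_empty_or_nonempty with hTe | hTne
      · have hIe : ∀ i, I i = ∅ := by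
          intro i
          have := hsubT i
          rw [hTe] at this
          exact Finset.subset_empty.1 this
        rw [hTe, avgD_empty q hq f hf0]
        rw [Finset.prod_congr rfl (fun i _ => by rw [hIe i, avgD_empty q hq f hf0])]
        simp
      · push_neg at hcut
        obtain ⟨i0, hi0⟩ := cluster_subset r s I hsep T hTne hTsub (by
          intro c hl hu
          obtain ⟨a, ha, h1, b, hb, h2, h3⟩ := hcut c hl hu
          exact ⟨a, ha, b, hb, h1, h2, by omega⟩)
        have hTI : T = I i0 := by
          apply Finset.Subset.antisymm
          · intro x hx; exact hi0 x hx
          · exact hsubT i0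
        have hIe : ∀ j, j ≠ i0 → I j = ∅ := by
          intro j hj
          rw [Finset.eq_empty_iff_forall_notMem]
          intro x hx
          have hxT : x ∈ I i0 := hi0 x (hsubT j hx)
          have := hsep j i0 hj x hx x hxT
          simp at this
          omega
        rw [hTI]
        rw [Finset.prod_eq_single_of_mem i0 (Finset.mem_univ i0)
          (fun j _ hj => by rw [hIe j hj]; exact avgD_empty q hq f hf0)]

lemma abs_avgD_le_one (q : ℕ) (hq : 2 ≤ q) (f : ℕ → ℂ)
    (huni : ∀ n, ‖f n‖ = 1) (I : Finset ℕ) :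
    ‖avgD q f I‖ ≤ 1 := by
  rw [avgD, norm_div]
  have hcard : 0 < (digitNums q I).card := card_digitNums_pos q hq I
  have h1 : ‖∑ n ∈ digitNums q I, f n‖ ≤ (digitNums q I).card := by
    calc ‖∑ n ∈ digitNums q I, f n‖
        ≤ ∑ n ∈ digitNums q I, ‖f n‖ := by
          exact norm_sum_le _ _
      _ = (digitNums q I).card := by
          rw [Finset.sum_congr rfl (fun n _ => huni n), Finset.sum_const, nsmul_eq_mul, mul_one]
  have h2 : ‖((digitNums q I).card : ℂ)‖ = (digitNums q I).card := by
    rw [Complex.norm_natCast]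
  rw [h2, div_le_one (by positivity)]
  exact h1


/-- For a `q`-quasimultiplicative unimodular sequence, the average over integers supported on a
union of finite sets separated by gaps of length `> r` is the product of the averages, and
consequently `λ_f` is additive over such a union. -/
theorem stmt_8 (q r : ℕ) (hq : 2 ≤ q) (f : ℕ → ℂ)
    (huni : ∀ n, ‖f n‖ = 1) (hf0 : f 0 = 1)
    (hqm : ∀ l n m : ℕ, m < q ^ l → q ^ (l + r) ∣ n → f (n + m) = f n * f m)
    (s : ℕ) (I : Fin s → Finset ℕ)
    (hsep : ∀ i j, i ≠ j → ∀ a ∈ I i, ∀ b ∈ I j, (r : ℤ) < |(a : ℤ) - (b : ℤ)|) :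
    avgD q f (Finset.univ.biUnion I) = ∏ i, avgD q f (I i) ∧
    lam q f (Finset.univ.biUnion I) = ∑ i, lam q f (I i) := by

  have h1 : avgD q f (Finset.univ.biUnion I) = ∏ i, avgD q f (I i) :=
    avgD_biUnion_aux q r hq f hf0 hqm (Finset.univ.biUnion I).card s I le_rfl hsep
  refine ⟨h1, ?_⟩
  by_cases hzero : ∃ i, avgD q f (I i) = 0
  · obtain ⟨i0, hi0⟩ := hzero
    have hprod : avgD q f (Finset.univ.biUnion I) = 0 := by
      rw [h1]
      exact Finset.prod_eq_zero (Finset.mem_univ i0) hi0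
    rw [lam, if_pos hprod]
    symm
    rw [ENNReal.sum_eq_top]
    exact ⟨i0, Finset.mem_univ i0, by rw [lam, if_pos hi0]⟩
  · push_neg at hzero
    have hprodne : avgD q f (Finset.univ.biUnion I) ≠ 0 := by
      rw [h1]
      exact Finset.prod_ne_zero_iff.2 fun i _ => hzero i
    rw [lam, if_neg hprodne]
    have habs : ‖avgD q f (Finset.univ.biUnion I)‖
        = ∏ i, ‖avgD q f (I i)‖ := by
      rw [h1]; exact norm_prod _ _
    have hlog : -Real.log (‖avgD q f (Finset.univ.biUnion I)‖)
        = ∑ i, -Real.log (‖avgD q f (I i)‖) := by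
      rw [habs, Real.log_prod (fun i _ => by
        simpa [norm_ne_zero_iff] using hzero i)]
      rw [Finset.sum_neg_distrib]
    rw [hlog, ENNReal.ofReal_sum_of_nonneg]
    · apply Finset.sum_congr rfl
      intro i _
      rw [lam, if_neg (hzero i)]
    · intro i _
      rw [neg_nonneg]
      apply Real.log_nonpos (by positivity)
      exact abs_avgD_le_one q hq f huni (I i)
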